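/- Let B_{m,i} = {x ∈ ℤ₄^{2m} : wt₀(x)=2m−i, wt₁(x)=i} and C_{m,u,v} = {x : wt₁(x)=u, wt₃(x)=v, wt₀(x)=2m−u−v}. Then C_{m,u,v} meets the difference multiset B_{m,i} − B_{m,j} (i.e., some element of C_{m,u,v} can be written as b₁ − b₂ with b₁ ∈ B_{m,i}, b₂ ∈ B_{m,j}) if and only if i = u+h and j = v+h for some 0 ≤ h ≤ 2m−u−v. -/

import Mathlib

/-!
Every vector of `B_{m,i}` is the 0/1 indicator vector `1_S` of an `i`-subset `S` of the
coordinates, and `1_S - 1_T` equals `1` exactly on `S \ T`, `3` exactly on `T \ S` and `0`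
elsewhere. The question is therefore which Venn diagrams of two sets exist: `S, T` with
`|S \ T| = u`, `|T \ S| = v`, `|S| = i`, `|T| = j` exist iff `i = u + h`, `j = v + h` for
`h = |S ∩ T|`, and the only constraint is `u + v + h = |S ∪ T| ≤ 2m`.
-/

/-- `wt_j(x)`: the number of coordinates of `x` equal to `j`. -/
def wt {n : ℕ} (j : ZMod 4) (x : Fin n → ZMod 4) : ℕ :=
  (Finset.univ.filter fun i => x i = j).card

/-- `B_{m,i} = {x ∈ ℤ₄^{2m} : wt₀(x) = 2m - i, wt₁(x) = i}`. -/
def Bset (m i : ℕ) : Finset (Fin (2 * m) → ZMod 4) :=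
  Finset.univ.filter fun x => wt 0 x = 2 * m - i ∧ wt 1 x = i

/-- `C_{m,u,v} = {x ∈ ℤ₄^{2m} : wt₁(x) = u, wt₃(x) = v, wt₀(x) = 2m - u - v}`. -/
def Cset (m u v : ℕ) : Finset (Fin (2 * m) → ZMod 4) :=
  Finset.univ.filter fun x => wt 1 x = u ∧ wt 3 x = v ∧ wt 0 x = 2 * m - u - v

open Finset

theorem card_union_eq_card_sdiff_add_card_sdiff_add_card_inter {α : Type*} [DecidableEq α]
    (S T : Finset α) :
    #(S ∪ T) = #(S \ T) + #(T \ S) + #(S ∩ T) := by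
  have hST := card_sdiff_add_card_inter S T
  have hTS := card_sdiff_add_card_inter T S
  rw [inter_comm T S] at hTS
  have := card_union_add_card_inter S T
  omega

theorem exists_finsets_card_sdiff_iff {α : Type*} [Fintype α] [DecidableEq α] {u v i j : ℕ}
    (huv : u + v ≤ Fintype.card α) :
    (∃ S T : Finset α, #(S \ T) = u ∧ #(T \ S) = v ∧ #S = i ∧ #T = j) ↔
      ∃ h ≤ Fintype.card α - u - v, i = u + h ∧ j = v + h := by
  constructor
  · rintro ⟨S, T, rfl, rfl, rfl, rfl⟩
    refine ⟨#(S ∩ T), ?_, (card_sdiff_add_card_inter S T).symm, ?_⟩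
    · have hunion := card_union_eq_card_sdiff_add_card_sdiff_add_card_inter S T
      have hle := card_le_univ (S ∪ T)
      omega
    · rw [inter_comm, card_sdiff_add_card_inter]
  · rintro ⟨h, hh, rfl, rfl⟩
    -- `Z ⊆ Y ⊆ X` of sizes `u`, `u + h`, `u + v + h`; take `S = Y` and `T = X \ Z`.
    obtain ⟨X, -, hX⟩ := exists_subset_card_eq (s := (univ : Finset α)) (n := u + v + h)
      (by rw [card_univ]; omega)
    obtain ⟨Y, hYX, hY⟩ := exists_subset_card_eq (s := X) (n := u + h) (by omega)
    obtain ⟨Z, hZY, hZ⟩ := exists_subset_card_eq (s := Y) (n := u) (by omega)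
    refine ⟨Y, X \ Z, ?_, ?_, hY, ?_⟩
    · rw [show Y \ (X \ Z) = Z by grind]
      exact hZ
    · rw [show (X \ Z) \ Y = X \ Y by grind, card_sdiff_of_subset hYX]
      omega
    · rw [card_sdiff_of_subset (hZY.trans hYX)]
      omega

section IndicatorVec

variable {n : ℕ}

def indicatorVec (S : Finset (Fin n)) : Fin n → ZMod 4 := fun k => if k ∈ S then 1 else 0

theorem wt_eq_card {j : ZMod 4} {x : Fin n → ZMod 4} {S : Finset (Fin n)}
    (h : ∀ k, x k = j ↔ k ∈ S) : wt j x = #S := by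
  unfold wt
  congr 1
  ext k
  simp [h]

theorem wt_one_indicatorVec (S : Finset (Fin n)) : wt 1 (indicatorVec S) = #S :=
  wt_eq_card fun k => by by_cases hk : k ∈ S <;> simp +decide [indicatorVec, hk]

theorem wt_zero_indicatorVec (S : Finset (Fin n)) : wt 0 (indicatorVec S) = n - #S := by
  rw [wt_eq_card (S := Sᶜ) fun k => by by_cases hk : k ∈ S <;> simp +decide [indicatorVec, hk],
    card_compl, Fintype.card_fin]

theorem wt_one_indicatorVec_sub (S T : Finset (Fin n)) :
    wt 1 (indicatorVec S - indicatorVec T) = #(S \ T) :=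
  wt_eq_card fun k => by
    by_cases hS : k ∈ S <;> by_cases hT : k ∈ T <;> simp +decide [indicatorVec, hS, hT]

theorem wt_three_indicatorVec_sub (S T : Finset (Fin n)) :
    wt 3 (indicatorVec S - indicatorVec T) = #(T \ S) :=
  wt_eq_card fun k => by
    by_cases hS : k ∈ S <;> by_cases hT : k ∈ T <;> simp +decide [indicatorVec, hS, hT]

theorem wt_zero_indicatorVec_sub (S T : Finset (Fin n)) :
    wt 0 (indicatorVec S - indicatorVec T) = n - #(S \ T) - #(T \ S) := by
  rw [wt_eq_card (S := (S \ T ∪ T \ S)ᶜ) fun k => by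
      by_cases hS : k ∈ S <;> by_cases hT : k ∈ T <;> simp +decide [indicatorVec, hS, hT],
    card_compl, Fintype.card_fin, card_union_of_disjoint disjoint_sdiff_sdiff]
  omega

theorem eq_indicatorVec_of_wt_zero_add_wt_one {x : Fin n → ZMod 4}
    (hx : wt 0 x + wt 1 x = n) : x = indicatorVec (univ.filter fun k => x k = 1) := by
  have hcover : (univ.filter fun k => x k = 0) ∪ (univ.filter fun k => x k = 1) = univ := by
    have hdisj : Disjoint (univ.filter fun k => x k = 0) (univ.filter fun k => x k = 1) :=
      disjoint_filter.mpr fun _ _ h0 h1 => absurd (h0.symm.trans h1) (by decide)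
    refine eq_univ_of_card _ ?_
    rw [card_union_of_disjoint hdisj]
    simpa [wt] using hx
  funext k
  have hk : k ∈ (univ.filter fun k => x k = 0) ∪ (univ.filter fun k => x k = 1) := by
    rw [hcover]
    exact mem_univ k
  simp only [mem_union, mem_filter, mem_univ, true_and] at hk
  rcases hk with h0 | h1
  · simp +decide [indicatorVec, h0]
  · simp [indicatorVec, h1]

end IndicatorVec

theorem mem_Bset_iff {m i : ℕ} {b : Fin (2 * m) → ZMod 4} :
    b ∈ Bset m i ↔ ∃ S, #S = i ∧ b = indicatorVec S := by
  constructor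
  · intro hb
    obtain ⟨h0, h1⟩ : wt 0 b = 2 * m - i ∧ wt 1 b = i := by simpa [Bset] using hb
    have hle : wt 1 b ≤ 2 * m := by
      simpa [wt] using card_le_univ (univ.filter fun k => b k = 1)
    exact ⟨_, h1, eq_indicatorVec_of_wt_zero_add_wt_one (by omega)⟩
  · rintro ⟨S, rfl, rfl⟩
    simp [Bset, wt_zero_indicatorVec, wt_one_indicatorVec]

theorem indicatorVec_sub_mem_Cset_iff {m u v : ℕ} {S T : Finset (Fin (2 * m))} :
    indicatorVec S - indicatorVec T ∈ Cset m u v ↔ #(S \ T) = u ∧ #(T \ S) = v := by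
  simp only [Cset, mem_filter, mem_univ, true_and, wt_one_indicatorVec_sub,
    wt_three_indicatorVec_sub, wt_zero_indicatorVec_sub]
  constructor
  · exact fun h => ⟨h.1, h.2.1⟩
  · rintro ⟨rfl, rfl⟩
    exact ⟨rfl, rfl, rfl⟩

theorem stmt10 (m u v i j : ℕ) (huv : u + v ≤ 2 * m) :
    (∃ x ∈ Cset m u v, ∃ b₁ ∈ Bset m i, ∃ b₂ ∈ Bset m j, x = b₁ - b₂) ↔
    (∃ h : ℕ, h ≤ 2 * m - u - v ∧ i = u + h ∧ j = v + h) := by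
  have venn := exists_finsets_card_sdiff_iff (α := Fin (2 * m)) (i := i) (j := j)
    (by rwa [Fintype.card_fin])
  rw [Fintype.card_fin] at venn
  rw [← venn]
  constructor
  · rintro ⟨_, hx, _, hb₁, _, hb₂, rfl⟩
    obtain ⟨S, rfl, rfl⟩ := mem_Bset_iff.mp hb₁
    obtain ⟨T, rfl, rfl⟩ := mem_Bset_iff.mp hb₂
    obtain ⟨hu, hv⟩ := indicatorVec_sub_mem_Cset_iff.mp hx
    exact ⟨S, T, hu, hv, rfl, rfl⟩
  · rintro ⟨S, T, hu, hv, rfl, rfl⟩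
    exact ⟨_, indicatorVec_sub_mem_Cset_iff.mpr ⟨hu, hv⟩,
      _, mem_Bset_iff.mpr ⟨S, rfl, rfl⟩, _, mem_Bset_iff.mpr ⟨T, rfl, rfl⟩, rfl⟩
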